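/- arXiv:1704.05670 — 4 statements merged into one kernel-verified Lean document; each statement's English description precedes it below -/
import Mathlib

section
/- For every abstract position vector p ∈ ℕ^k satisfying 0 ≤ p(1) ≤ … ≤ p(k) ≤ 2μ and the condition that equal consecutive components are even, there exists a strictly increasing tuple of knots x_0 < t_1 < t_2 < … < t_k < x_{μ+1} whose induced position vector equals p. -/
/-!
Place the `j`-th knot at fraction `s j = (j + 1) / (k + 1)` of the way through the cell
indicated by `p j`: at `x ((p j + 1) / 2)` when `p j` is odd, and at
`x (p j / 2) + s j * (x (p j / 2 + 1) - x (p j / 2))` when `p j` is even.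
Knots with different positions are separated by the abscissae, and knots with equal
positions share an open interval, where the strictly increasing fractions order them.
-/

open Set

lemma Fin.monotone_of_le_next {α : Type*} [Preorder α] {k : ℕ} {f : Fin k → α}
    (h : ∀ (j : Fin k) (hj : (j : ℕ) + 1 < k), f j ≤ f ⟨j + 1, hj⟩) : Monotone f := by
  cases k with
  | zero => exact fun i => i.elim0
  | succ k => exact Fin.monotone_iff_le_succ.2 fun i => h i.castSucc (by simp)

lemma Fin.prop_of_eq_of_monotone {α : Type*} [PartialOrder α] {k : ℕ} {f : Fin k → α}
    {P : α → Prop} (hf : Monotone f)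
    (hP : ∀ (j : Fin k) (hj : (j : ℕ) + 1 < k), f j = f ⟨j + 1, hj⟩ → P (f j))
    {i j : Fin k} (hij : i < j) (h : f i = f j) : P (f i) := by
  have hnext : (i : ℕ) + 1 < k := by omega
  refine hP i hnext (le_antisymm (hf (Fin.le_iff_val_le_val.2 (by simp))) ?_)
  exact h ▸ hf (Fin.le_iff_val_le_val.2 (by simp; omega))

noncomputable def knotAt (x : ℕ → ℝ) (q : ℕ) (s : ℝ) : ℝ :=
  if Even q then x (q / 2) + s * (x (q / 2 + 1) - x (q / 2)) else x ((q + 1) / 2)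

section knotAt

variable {x : ℕ → ℝ} {q q' : ℕ} {s s' : ℝ}

lemma knotAt_of_odd (hq : Odd q) (s : ℝ) : knotAt x q s = x ((q + 1) / 2) := by
  simp [knotAt, Nat.not_even_iff_odd.2 hq]

lemma knotAt_of_even (hq : Even q) (s : ℝ) :
    knotAt x q s = x (q / 2) + s * (x (q / 2 + 1) - x (q / 2)) := by
  simp [knotAt, hq]

lemma lt_knotAt_of_even (hq : Even q) (hx : x (q / 2) < x (q / 2 + 1)) (hs : 0 < s) :
    x (q / 2) < knotAt x q s := by
  rw [knotAt_of_even hq]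
  nlinarith

lemma knotAt_lt_of_even (hq : Even q) (hx : x (q / 2) < x (q / 2 + 1)) (hs : s < 1) :
    knotAt x q s < x (q / 2 + 1) := by
  rw [knotAt_of_even hq]
  nlinarith

lemma knotAt_lt_knotAt_of_even (hq : Even q) (hx : x (q / 2) < x (q / 2 + 1)) (hss : s < s') :
    knotAt x q s < knotAt x q s' := by
  rw [knotAt_of_even hq, knotAt_of_even hq]
  nlinarith

lemma knotAt_lt_knotAt_of_lt {m : ℕ} (hx : StrictMonoOn x (Iic m)) (hqq : q < q')
    (hq' : q' < 2 * m) (hs : s < 1) (hs' : 0 < s') : knotAt x q s < knotAt x q' s' := by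
  have hxlt : ∀ a b, a < b → b ≤ m → x a < x b := fun a b hab hb =>
    hx (mem_Iic.2 (hab.le.trans hb)) (mem_Iic.2 hb) hab
  have hxle : ∀ a b, a ≤ b → b ≤ m → x a ≤ x b := fun a b hab hb =>
    hx.monotoneOn (mem_Iic.2 (hab.trans hb)) (mem_Iic.2 hb) hab
  rcases Nat.even_or_odd q with hq | hq
  · calc knotAt x q s < x (q / 2 + 1) := knotAt_lt_of_even hq (hxlt _ _ (by omega) (by omega)) hs
      _ ≤ x ((q' + 1) / 2) := hxle _ _ (by grind) (by omega)
      _ ≤ knotAt x q' s' := by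
        rcases Nat.even_or_odd q' with hq'e | hq'o
        · have : (q' + 1) / 2 = q' / 2 := by grind
          exact this ▸ (lt_knotAt_of_even hq'e (hxlt _ _ (by omega) (by omega)) hs').le
        · rw [knotAt_of_odd hq'o]
  rw [knotAt_of_odd hq]
  rcases Nat.even_or_odd q' with hq'e | hq'o
  · calc x ((q + 1) / 2) ≤ x (q' / 2) := hxle _ _ (by grind) (by omega)
      _ < knotAt x q' s' := lt_knotAt_of_even hq'e (hxlt _ _ (by omega) (by omega)) hs'
  · rw [knotAt_of_odd hq'o]
    exact hxlt _ _ (by grind) (by omega)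

lemma strictMono_knotAt_comp {k m : ℕ} (hx : StrictMonoOn x (Iic m)) {p : Fin k → ℕ}
    (hp : Monotone p) (hpm : ∀ j, p j < 2 * m)
    (heven : ∀ i j, i < j → p i = p j → Even (p i)) {s : Fin k → ℝ} (hs : StrictMono s)
    (hs01 : ∀ j, s j ∈ Ioo 0 1) : StrictMono fun j => knotAt x (p j) (s j) := by
  intro i j hij
  rcases (hp hij.le).lt_or_eq with hlt | heq
  · exact knotAt_lt_knotAt_of_lt hx hlt (hpm j) (hs01 i).2 (hs01 j).1
  · have hpi := heven i j hij heq
    simp only [← heq]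
    exact knotAt_lt_knotAt_of_even hpi
      (hx (mem_Iic.2 (by grind)) (mem_Iic.2 (by grind)) (by omega)) (hs hij)

lemma knotAt_mem_Ioo {m : ℕ} (hx : StrictMonoOn x (Iic (m + 1))) (hq : q ≤ 2 * m)
    (hs : s ∈ Ioo 0 1) : knotAt x q s ∈ Ioo (x 0) (x (m + 1)) := by
  have hx0 : knotAt x 0 0 = x 0 := by simp [knotAt]
  have hxend : knotAt x (2 * m + 1) 1 = x (m + 1) := by
    rw [knotAt_of_odd (odd_two_mul_add_one m)]
    congr 1
    omega
  constructor
  · rcases Nat.eq_zero_or_pos q with rfl | hpos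
    · exact hx0 ▸ knotAt_lt_knotAt_of_even Even.zero
        (hx (mem_Iic.2 (by omega)) (mem_Iic.2 (by omega)) (by omega)) hs.1
    · exact hx0 ▸ knotAt_lt_knotAt_of_lt hx hpos (by omega) zero_lt_one hs.1
  · exact hxend ▸ knotAt_lt_knotAt_of_lt hx (by omega) (by omega) hs.2 one_pos

end knotAt

theorem stmt2_general (μ k : ℕ) (x : ℕ → ℝ) (p : Fin k → ℕ)
    (hx : ∀ i, i ≤ μ → x i < x (i + 1))
    (hmono : ∀ (j : Fin k) (h : (j : ℕ) + 1 < k), p j ≤ p ⟨(j : ℕ) + 1, h⟩)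
    (hub : ∀ j, p j ≤ 2 * μ)
    (heq : ∀ (j : Fin k) (h : (j : ℕ) + 1 < k),
      p j = p ⟨(j : ℕ) + 1, h⟩ → Even (p j)) :
    ∃ t : Fin k → ℝ, StrictMono t ∧ (∀ j, x 0 < t j ∧ t j < x (μ + 1)) ∧
      ∀ j : Fin k,
        (Odd (p j) → t j = x ((p j + 1) / 2)) ∧
        (Even (p j) → x (p j / 2) < t j ∧ t j < x (p j / 2 + 1)) := by
  have hxm : StrictMonoOn x (Iic (μ + 1)) :=
    strictMonoOn_Iic_of_lt_succ fun i hi => hx i (Nat.lt_succ_iff.1 hi)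
  have hcell : ∀ j, x (p j / 2) < x (p j / 2 + 1) := fun j => hx _ (by grind)
  have hpm : ∀ j, p j < 2 * (μ + 1) := fun j => by grind
  set s : Fin k → ℝ := fun j => ((j : ℕ) + 1 : ℝ) / (k + 1)
  have hs : StrictMono s := fun i j hij => by
    simp only [s]
    gcongr
    exact_mod_cast hij
  have hs01 : ∀ j, s j ∈ Ioo 0 1 := fun j => by
    refine ⟨by positivity, (div_lt_one (by positivity)).2 ?_⟩
    exact_mod_cast Nat.succ_lt_succ j.isLt
  have hp : Monotone p := Fin.monotone_of_le_next hmono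
  refine ⟨fun j => knotAt x (p j) (s j),
    strictMono_knotAt_comp hxm hp hpm (fun i j => Fin.prop_of_eq_of_monotone hp heq) hs hs01,
    fun j => knotAt_mem_Ioo hxm (hub j) (hs01 j), fun j => ⟨fun ho => knotAt_of_odd ho _, ?_⟩⟩
  intro he
  exact ⟨lt_knotAt_of_even he (hcell j) (hs01 j).1, knotAt_lt_of_even he (hcell j) (hs01 j).2⟩

/-- every abstract position vector (weakly increasing, bounded by 2μ,
with equal consecutive components even) is realized by a strictly increasing tuple
of knots in (x 0, x (μ+1)). -/
theorem stmt2 (μ k : ℕ) (hμ : 1 ≤ μ) (x : ℕ → ℝ) (p : Fin k → ℕ)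
    (hx : ∀ i, i ≤ μ → x i < x (i + 1))
    (hmono : ∀ (j : Fin k) (h : (j : ℕ) + 1 < k), p j ≤ p ⟨(j : ℕ) + 1, h⟩)
    (hub : ∀ j, p j ≤ 2 * μ)
    (heq : ∀ (j : Fin k) (h : (j : ℕ) + 1 < k),
      p j = p ⟨(j : ℕ) + 1, h⟩ → Even (p j)) :
    ∃ t : Fin k → ℝ, StrictMono t ∧ (∀ j, x 0 < t j ∧ t j < x (μ + 1)) ∧
      ∀ j : Fin k,
        (Odd (p j) → t j = x ((p j + 1) / 2)) ∧
        (Even (p j) → x (p j / 2) < t j ∧ t j < x (p j / 2 + 1)) :=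
  stmt2_general μ k x p hx hmono hub heq
end

section
/- Let k = ⌊μ/2⌋. Then the number of regular position vectors of length k for μ+2 data abscissae grows at least exponentially in μ: it is bounded below by C(μ, ⌊μ/2⌋), which is at least 2^μ/(μ+1). -/
/-- A regular position vector of length `k` for `μ+2` data abscissae. -/
def RegularPos (μ k : ℕ) (p : Fin k → ℕ) : Prop :=
  (∀ j, 1 ≤ p j ∧ p j ≤ 2 * μ - 1) ∧
  (∀ j i : Fin k, Even (p j) →
    (i < j → p i ≠ p j - 1) ∧ (j < i → p i ≠ p j + 1)) ∧
  (∀ (j l : ℕ) (h : j + l + 1 < k),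
    Even (p ⟨j, by omega⟩) → Even (p ⟨j + l + 1, h⟩) →
    (∀ m (_ : j < m) (hm : m < j + l + 1), Odd (p ⟨m, by omega⟩)) →
    p ⟨j, by omega⟩ / 2 + 2 + l ≤ p ⟨j + l + 1, h⟩ / 2) ∧
  (∀ (j : Fin k) (h : (j : ℕ) + 1 < k),
    (Even (p j) ∧ Even (p ⟨(j : ℕ) + 1, h⟩) → p j + 4 ≤ p ⟨(j : ℕ) + 1, h⟩) ∧
    (¬(Even (p j) ∧ Even (p ⟨(j : ℕ) + 1, h⟩)) → p j + 2 ≤ p ⟨(j : ℕ) + 1, h⟩))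

/-!
Sending a `k`-subset `{a₁ < ⋯ < a_k}` of `{0, …, μ - 1}` to the odd vector
`(2a₁ + 1, …, 2a_k + 1)` is injective, and every strictly increasing vector of odd
positions is regular, since all constraints of `RegularPos` except the range and the
gap `p j + 2 ≤ p (j + 1)` only concern even entries. Hence there are at least `C(μ, k)`
regular position vectors. The bound `2 ^ μ ≤ (μ + 1) C(μ, ⌊μ/2⌋)` holds because the
middle coefficient is the largest of the `μ + 1` terms of `∑ᵢ C(μ, i) = 2 ^ μ`.
-/

theorem Nat.two_pow_le_succ_mul_choose_half (n : ℕ) : 2 ^ n ≤ (n + 1) * n.choose (n / 2) :=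
  calc 2 ^ n = ∑ i ∈ Finset.range (n + 1), n.choose i := (Nat.sum_range_choose n).symm
    _ ≤ ∑ _i ∈ Finset.range (n + 1), n.choose (n / 2) :=
        Finset.sum_le_sum fun i _ => Nat.choose_le_middle i n
    _ = (n + 1) * n.choose (n / 2) := by simp

theorem Nat.card_orderEmbedding_fin (k n : ℕ) : Nat.card (Fin k ↪o Fin n) = n.choose k := by
  rw [Nat.card_congr Set.powersetCard.ofFinEmbEquiv, Set.powersetCard.card, Nat.card_fin]

theorem regularPos_of_odd_of_strictMono {μ k : ℕ} {p : Fin k → ℕ} (hodd : ∀ j, Odd (p j))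
    (hmono : StrictMono p) (hle : ∀ j, p j ≤ 2 * μ - 1) : RegularPos μ k p := by
  have hne : ∀ j, ¬Even (p j) := fun j => Nat.not_even_iff_odd.mpr (hodd j)
  refine ⟨fun j => ⟨(hodd j).pos, hle j⟩, fun j _ h => absurd h (hne j),
    fun j _ _ h => absurd h (hne _), fun j h => ⟨fun h' => absurd h'.1 (hne j), fun _ => ?_⟩⟩
  have hlt : p j < p ⟨j + 1, h⟩ := hmono (Fin.mk_lt_mk.mpr (Nat.lt_succ_self j))
  obtain ⟨a, ha⟩ := hodd j
  obtain ⟨b, hb⟩ := hodd ⟨j + 1, h⟩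
  omega

theorem regularPos_odd_of_orderEmbedding {μ k : ℕ} (e : Fin k ↪o Fin μ) :
    RegularPos μ k (fun j => 2 * e j + 1) :=
  regularPos_of_odd_of_strictMono (fun j => odd_two_mul_add_one _)
    (fun _ _ hij => by have := e.strictMono hij; simp only [Fin.lt_def] at this; omega)
    (fun j => by have := (e j).isLt; omega)

theorem finite_setOf_regularPos (μ k : ℕ) : {p : Fin k → ℕ | RegularPos μ k p}.Finite :=
  (Set.Finite.pi fun _ => Set.finite_Iic (2 * μ)).subset fun p hp =>
    Set.mem_univ_pi.mpr fun j => Set.mem_Iic.mpr (by have := (hp.1 j).2; omega)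

theorem choose_le_ncard_setOf_regularPos (μ k : ℕ) :
    μ.choose k ≤ {p : Fin k → ℕ | RegularPos μ k p}.ncard := by
  have hinj : Function.Injective fun (e : Fin k ↪o Fin μ) (j : Fin k) => 2 * (e j : ℕ) + 1 :=
    fun e e' h => DFunLike.ext _ _ fun j =>
      Fin.ext (by have := congrFun h j; simp only at this; omega)
  rw [← Nat.card_orderEmbedding_fin, ← Nat.card_range_of_injective hinj, Nat.card_coe_set_eq]
  exact Set.ncard_le_ncard (Set.range_subset_iff.mpr regularPos_odd_of_orderEmbedding)
    (finite_setOf_regularPos μ k)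

/-- for k = ⌊μ/2⌋, the number of regular position vectors of
length k grows at least exponentially in μ: it is at least C(μ, ⌊μ/2⌋), which
in turn is at least 2^μ/(μ+1). -/
theorem stmt6 (μ : ℕ) :
    2 ^ μ ≤ (μ + 1) * Nat.choose μ (μ / 2) ∧
    Nat.choose μ (μ / 2) ≤ {p : Fin (μ / 2) → ℕ | RegularPos μ (μ / 2) p}.ncard :=
  ⟨Nat.two_pow_le_succ_mul_choose_half μ, choose_le_ncard_setOf_regularPos μ (μ / 2)⟩
end

section
/- Best least-squares approximation by first-degree splines can preserve convexity in the following instance: for the data x_i = −1 + i/10, f_i = x_i², i = 0,…,20, there exists a best approximation from the set of continuous piecewise-linear functions with at most 5 free knots on [−1,1] that is a convex function. -/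
/-!
A spline in `S¹₅[-1,1]` is a single line on each of six runs of consecutive data points. On a
run of `n` points with spacing `h`, no line fits `x ^ 2` with squared error below
`h ^ 4 n (n ^ 2 - 1) (n ^ 2 - 4) / 180`: this is Cauchy–Schwarz against the discrete Legendre
polynomial of degree 2, which is orthogonal to all lines. The bound is convex in `n`, and its
chord through `n = 3, 4` gives a total error of at least `2 h ^ 4 (5 · 21 - 14 · 6) / 3 = 21/15000`.
The upper envelope of the least-squares lines of runs of `3, 3, 3, 4, 4, 4` points is convex,
lies in `S¹₅[-1,1]`, and attains this value.
-/

def AffOn (s : ℝ → ℝ) (I : Set ℝ) : Prop := ∃ c d : ℝ, ∀ y ∈ I, s y = c * y + d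

/-- `S¹_k[a,b]`: continuous piecewise-affine functions on `[a,b]` with at most
`k` free knots `a < t₁ < … < t_k < b`. -/
def Spline1 (k : ℕ) (a b : ℝ) : Set (ℝ → ℝ) :=
  {s | ∃ u : Fin (k + 2) → ℝ, u 0 = a ∧ u (Fin.last (k + 1)) = b ∧ StrictMono u ∧
    ContinuousOn s (Set.Icc a b) ∧
    ∀ j : Fin (k + 1), AffOn s (Set.Icc (u j.castSucc) (u j.succ))}

open Finset

lemma sum_range_natCast (m : ℕ) : ∑ t ∈ range m, (t : ℝ) = m * (m - 1) / 2 := by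
  induction m with
  | zero => simp
  | succ m ih => rw [sum_range_succ, ih]; push_cast; ring

lemma sum_range_natCast_sq (m : ℕ) :
    ∑ t ∈ range m, (t : ℝ) ^ 2 = m * (m - 1) * (2 * m - 1) / 6 := by
  induction m with
  | zero => simp
  | succ m ih => rw [sum_range_succ, ih]; push_cast; ring

lemma sum_range_natCast_pow_three (m : ℕ) : ∑ t ∈ range m, (t : ℝ) ^ 3 = (m * (m - 1) / 2) ^ 2 := by
  induction m with
  | zero => simp
  | succ m ih => rw [sum_range_succ, ih]; push_cast; ring

lemma sum_range_natCast_pow_four (m : ℕ) :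
    ∑ t ∈ range m, (t : ℝ) ^ 4 = m * (m - 1) * (2 * m - 1) * (3 * m ^ 2 - 3 * m - 1) / 30 := by
  induction m with
  | zero => simp
  | succ m ih => rw [sum_range_succ, ih]; push_cast; ring

/-- The least-squares error of the best line through the points `(t, t ^ 2)`, `t < n`. -/
noncomputable def parabolaFitError (n : ℕ) : ℝ := n * (n ^ 2 - 1) * (n ^ 2 - 4) / 180

/-- Up to scaling, the discrete Legendre polynomial of degree 2 on `{0, …, m - 1}`. -/
def discreteLegendreTwo (m : ℕ) (t : ℝ) : ℝ := 6 * t ^ 2 - 6 * (m - 1) * t + (m - 1) * (m - 2)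

lemma sum_quadratic_mul_discreteLegendreTwo (m : ℕ) (a b c : ℝ) :
    ∑ t ∈ range m, (a * t ^ 2 + b * t + c) * discreteLegendreTwo m t =
      6 * a * parabolaFitError m := by
  have expand : ∀ t : ℝ, (a * t ^ 2 + b * t + c) * discreteLegendreTwo m t =
      6 * a * t ^ 4 + (6 * b - 6 * (m - 1) * a) * t ^ 3
        + (6 * c - 6 * (m - 1) * b + (m - 1) * (m - 2) * a) * t ^ 2
        + ((m - 1) * (m - 2) * b - 6 * (m - 1) * c) * t + (m - 1) * (m - 2) * c := by
    intro t; unfold discreteLegendreTwo; ring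
  simp only [expand, sum_add_distrib, ← mul_sum, sum_const, card_range, nsmul_eq_mul,
    sum_range_natCast, sum_range_natCast_sq, sum_range_natCast_pow_three,
    sum_range_natCast_pow_four, parabolaFitError]
  ring

lemma sq_mul_parabolaFitError_le_sum_sq_quadratic (m : ℕ) (a b c : ℝ) :
    a ^ 2 * parabolaFitError m ≤ ∑ t ∈ range m, (a * t ^ 2 + b * t + c) ^ 2 := by
  have hpp : ∑ t ∈ range m, discreteLegendreTwo m t ^ 2 = 36 * parabolaFitError m := by
    rw [show (36 : ℝ) = 6 * 6 by norm_num, ← sum_quadratic_mul_discreteLegendreTwo m 6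
      (-6 * (m - 1)) ((m - 1) * (m - 2))]
    refine sum_congr rfl fun t _ => ?_
    rw [sq]; congr 1; unfold discreteLegendreTwo; ring
  have cs := sum_mul_sq_le_sq_mul_sq (range m) (fun t : ℕ => a * (t : ℝ) ^ 2 + b * t + c)
    (fun t => discreteLegendreTwo m t)
  rw [sum_quadratic_mul_discreteLegendreTwo, hpp] at cs
  have hE : 0 ≤ parabolaFitError m := by
    have := sum_nonneg fun t (_ : t ∈ range m) => sq_nonneg (discreteLegendreTwo m t)
    linarith
  rcases hE.eq_or_lt with hE0 | hEpos
  · rw [← hE0, mul_zero]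
    exact sum_nonneg fun t _ => sq_nonneg _
  · nlinarith

lemma Finset.eq_Icc_min'_max'_of_ordConnected {α : Type*} [LinearOrder α] [LocallyFiniteOrder α]
    {s : Finset α} (hs : (s : Set α).OrdConnected) (hne : s.Nonempty) :
    s = Icc (s.min' hne) (s.max' hne) := by
  ext x
  refine ⟨fun hx => mem_Icc.2 ⟨min'_le s x hx, le_max' s x hx⟩, fun hx => ?_⟩
  exact hs.out (min'_mem s hne) (max'_mem s hne) (by simpa using hx)

lemma pow_four_mul_parabolaFitError_le_sum_sq_sub_line {s : Finset ℕ}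
    (hs : (s : Set ℕ).OrdConnected) (x₀ h C D : ℝ) :
    h ^ 4 * parabolaFitError #s ≤
      ∑ i ∈ s, ((x₀ + h * i) ^ 2 - (C * (x₀ + h * i) + D)) ^ 2 := by
  rcases s.eq_empty_or_nonempty with rfl | hne
  · simp [parabolaFitError]
  set k := s.min' hne
  rw [Finset.eq_Icc_min'_max'_of_ordConnected hs hne, ← Ico_add_one_right_eq_Icc,
    sum_Ico_eq_sum_range, Nat.card_Ico]
  have hres : ∀ t : ℕ, (x₀ + h * ↑(k + t)) ^ 2 - (C * (x₀ + h * ↑(k + t)) + D) =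
      h ^ 2 * t ^ 2 + h * (2 * (x₀ + h * k) - C) * t +
        ((x₀ + h * k) ^ 2 - (C * (x₀ + h * k) + D)) := by
    intro t; push_cast; ring
  rw [sum_congr rfl fun t _ => by rw [hres t], show h ^ 4 = (h ^ 2) ^ 2 by ring]
  exact sq_mul_parabolaFitError_le_sum_sq_quadratic _ _ _ _

lemma Monotone.ordConnected_range_filter_eq {ι : Type*} [PartialOrder ι] [DecidableEq ι]
    {π : ℕ → ι} (hπ : Monotone π) (N : ℕ) (j : ι) :
    (({i ∈ range N | π i = j} : Finset ℕ) : Set ℕ).OrdConnected := by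
  refine Set.ordConnected_iff.2 fun a ha b hb _ i hi => ?_
  simp only [coe_filter, mem_range, Set.mem_ofPred_eq] at ha hb ⊢
  exact ⟨hi.2.trans_lt hb.1, le_antisymm (hb.2 ▸ hπ hi.2) (ha.2 ▸ hπ hi.1)⟩

section KnotIndex

variable {α : Type*} [LinearOrder α] {k : ℕ} (u : Fin (k + 2) → α)

noncomputable def knotIndex (x : α) : Fin (k + 1) :=
  ({j | u j.castSucc ≤ x} : Finset (Fin (k + 1))).sup id

lemma monotone_knotIndex : Monotone (knotIndex u) := by
  intro x y hxy
  refine sup_mono fun j hj => ?_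
  simp only [mem_filter, mem_univ, true_and] at hj ⊢
  exact hj.trans hxy

lemma mem_Icc_knotIndex {x : α} (h₀ : u 0 ≤ x) (h₁ : x ≤ u (Fin.last (k + 1))) :
    x ∈ Set.Icc (u (knotIndex u x).castSucc) (u (knotIndex u x).succ) := by
  obtain ⟨j, hj, hjx⟩ := exists_mem_eq_sup ({j | u j.castSucc ≤ x} : Finset (Fin (k + 1)))
    ⟨0, by simpa using h₀⟩ id
  simp only [mem_filter, mem_univ, true_and] at hj
  rw [knotIndex, hjx, id]
  refine ⟨hj, le_of_not_gt fun hlt => ?_⟩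
  rcases Fin.eq_castSucc_or_eq_last j with ⟨i, rfl⟩ | rfl
  · have hmem : i.succ ∈ ({j | u j.castSucc ≤ x} : Finset (Fin (k + 1))) := by
      rw [mem_filter, ← Fin.succ_castSucc]
      exact ⟨mem_univ _, hlt.le⟩
    have hle : i.succ ≤ i.castSucc := by simpa [hjx] using le_sup (f := id) hmem
    exact (Fin.castSucc_lt_succ (i := i)).not_ge hle
  · exact hlt.not_ge (by simpa using h₁)

end KnotIndex

lemma exists_affine_pieces_of_mem_spline1 {k : ℕ} {a b : ℝ} {s : ℝ → ℝ} (hs : s ∈ Spline1 k a b) :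
    ∃ (π : ℝ → Fin (k + 1)) (C D : Fin (k + 1) → ℝ), Monotone π ∧
      ∀ x ∈ Set.Icc a b, s x = C (π x) * x + D (π x) := by
  obtain ⟨u, hu₀, hu₁, -, -, haff⟩ := hs
  choose C D hCD using haff
  refine ⟨knotIndex u, C, D, monotone_knotIndex u, fun x hx => hCD _ x ?_⟩
  exact mem_Icc_knotIndex u (hu₀ ▸ hx.1) (hu₁ ▸ hx.2)

lemma pow_four_mul_sum_parabolaFitError_le_sum_sq_sub_piecewise {ι : Type*} [PartialOrder ι]
    [Fintype ι] [DecidableEq ι] {π : ℕ → ι} (hπ : Monotone π) (C D : ι → ℝ) (x₀ h : ℝ) (N : ℕ) :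
    h ^ 4 * ∑ j, parabolaFitError #{i ∈ range N | π i = j} ≤
      ∑ i ∈ range N, ((x₀ + h * i) ^ 2 - (C (π i) * (x₀ + h * i) + D (π i))) ^ 2 := by
  rw [← sum_fiberwise (range N) π, mul_sum]
  refine sum_le_sum fun j _ => ?_
  calc h ^ 4 * parabolaFitError #{i ∈ range N | π i = j}
      ≤ ∑ i ∈ range N with π i = j, ((x₀ + h * i) ^ 2 - (C j * (x₀ + h * i) + D j)) ^ 2 :=
        pow_four_mul_parabolaFitError_le_sum_sq_sub_line (hπ.ordConnected_range_filter_eq N j)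
          x₀ h (C j) (D j)
    _ = _ := sum_congr rfl fun i hi => by rw [(mem_filter.1 hi).2]

/-- The chord of the convex function `parabolaFitError` through `n = 3` and `n = 4`. -/
lemma chord_le_parabolaFitError (n : ℕ) :
    2 * (5 * n - 14) / 3 ≤ parabolaFitError n := by
  unfold parabolaFitError
  rcases Nat.lt_or_ge n 5 with hn | hn
  · interval_cases n <;> norm_num
  · have : (5 : ℝ) ≤ n := by exact_mod_cast hn
    nlinarith [mul_le_mul this this (by norm_num) (by linarith),
      mul_le_mul_of_nonneg_left this (by positivity : (0 : ℝ) ≤ n ^ 3)]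

lemma le_sum_sq_sub_of_mem_spline1 {k : ℕ} {a b : ℝ} {s : ℝ → ℝ} (hs : s ∈ Spline1 k a b)
    {x₀ h : ℝ} (hh : 0 ≤ h) {N : ℕ} (ha : a ≤ x₀) (hb : x₀ + h * (N - 1) ≤ b) :
    h ^ 4 * (2 * (5 * N - 14 * (k + 1)) / 3) ≤
      ∑ i ∈ range N, ((x₀ + h * i) ^ 2 - s (x₀ + h * i)) ^ 2 := by
  obtain ⟨π, C, D, hπ, hsCD⟩ := exists_affine_pieces_of_mem_spline1 hs
  set σ : ℕ → Fin (k + 1) := fun i => π (x₀ + h * i)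
  have hσ : Monotone σ := hπ.comp fun i j hij => by gcongr
  have hcard : ∑ j, (#{i ∈ range N | σ i = j} : ℝ) = N := by
    exact_mod_cast (card_eq_sum_card_fiberwise (fun _ _ => mem_univ _)).symm.trans (card_range N)
  calc h ^ 4 * (2 * (5 * N - 14 * (k + 1)) / 3)
      = h ^ 4 * ∑ j, 2 * (5 * (#{i ∈ range N | σ i = j} : ℝ) - 14) / 3 := by
        simp [← sum_div, ← mul_sum, sum_sub_distrib, hcard, mul_comm]
    _ ≤ h ^ 4 * ∑ j, parabolaFitError #{i ∈ range N | σ i = j} := by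
        gcongr with j
        exact chord_le_parabolaFitError _
    _ ≤ _ := pow_four_mul_sum_parabolaFitError_le_sum_sq_sub_piecewise hσ C D x₀ h N
    _ = _ := by
        refine sum_congr rfl fun i hi => ?_
        have hi : (i : ℝ) ≤ N - 1 := by
          have := mem_range.1 hi
          rw [le_sub_iff_add_le]; exact_mod_cast this
        rw [hsCD _ ⟨by nlinarith [(Nat.cast_nonneg i : (0 : ℝ) ≤ i)], by nlinarith⟩]

/-- Each line is the least-squares line of the data on one of the runs of `3, 3, 3, 4, 4, 4`
consecutive points; consecutive lines meet at the knots. -/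
noncomputable def sstarSlope : Fin 6 → ℝ := ![-9/5, -6/5, -3/5, 1/10, 9/10, 17/10]
noncomputable def sstarIntercept : Fin 6 → ℝ :=
  ![-241/300, -53/150, -1/12, 1/100, -19/100, -71/100]
noncomputable def sstarKnots : Fin 7 → ℝ := ![-1, -3/4, -9/20, -2/15, 1/4, 13/20, 1]

noncomputable def sstar (y : ℝ) : ℝ :=
  univ.sup' univ_nonempty fun j => sstarSlope j * y + sstarIntercept j

lemma sstar_eq (j : Fin 6) (y : ℝ) (hy : y ∈ Set.Icc (sstarKnots j.castSucc) (sstarKnots j.succ)) :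
    sstar y = sstarSlope j * y + sstarIntercept j := by
  refine le_antisymm (sup'_le _ _ fun j' _ => ?_)
    (le_sup' (fun j => sstarSlope j * y + sstarIntercept j) (mem_univ j))
  obtain ⟨h1, h2⟩ := hy
  fin_cases j <;> fin_cases j' <;> simp [sstarKnots, sstarSlope, sstarIntercept] at h1 h2 ⊢ <;>
    linarith

lemma convexOn_sstar : ConvexOn ℝ (Set.Icc (-1) 1) sstar := by
  have : sstar = univ.sup' univ_nonempty fun j y => sstarSlope j * y + sstarIntercept j := by
    ext y; simp [sstar, Finset.sup'_apply]
  rw [this]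
  exact sup'_induction _ _ (fun f hf g hg => hf.sup hg) fun j _ =>
    ((LinearMap.mulLeft ℝ (sstarSlope j)).convexOn (convex_Icc _ _)).add_const (sstarIntercept j)

lemma sstar_mem_spline1 : sstar ∈ Spline1 5 (-1) 1 := by
  refine ⟨sstarKnots, rfl, rfl, ?_, ?_, fun j => ⟨sstarSlope j, sstarIntercept j, sstar_eq j⟩⟩
  · rw [Fin.strictMono_iff_lt_succ]
    intro i
    fin_cases i <;> simp [sstarKnots] <;> norm_num
  · exact (Continuous.finset_sup'_apply _ fun j _ => by fun_prop).continuousOn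

lemma sstar_eq_max (y : ℝ) :
    sstar y = max (-9/5 * y - 241/300) (max (-6/5 * y - 53/150) (max (-3/5 * y - 1/12)
      (max (1/10 * y + 1/100) (max (9/10 * y - 19/100) (17/10 * y - 71/100))))) := by
  simp [sstar, Fin.univ_succ, sstarSlope, sstarIntercept]
  ring_nf

lemma sstar_error :
    ∑ i ∈ range 21, ((-1 + (i : ℝ) / 10) ^ 2 - sstar (-1 + (i : ℝ) / 10)) ^ 2 = 21 / 15000 := by
  norm_num [sum_range_succ, sstar_eq_max, max_def]

/-- for the convex data x_i = −1 + i/10, f_i = x_i², i = 0,…,20,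
there is a best least-squares approximation from S¹₅[−1,1] that is convex. -/
theorem stmt9 :
    ∃ s ∈ Spline1 5 (-1 : ℝ) 1,
      (∀ s' ∈ Spline1 5 (-1 : ℝ) 1,
        ∑ i ∈ Finset.range 21,
            ((-1 + (i : ℝ) / 10) ^ 2 - s (-1 + (i : ℝ) / 10)) ^ 2 ≤
        ∑ i ∈ Finset.range 21,
            ((-1 + (i : ℝ) / 10) ^ 2 - s' (-1 + (i : ℝ) / 10)) ^ 2) ∧
      ConvexOn ℝ (Set.Icc (-1 : ℝ) 1) s := by
  refine ⟨sstar, sstar_mem_spline1, fun s hs => ?_, convexOn_sstar⟩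
  have hlow := le_sum_sq_sub_of_mem_spline1 hs (x₀ := -1) (h := 1 / 10) (N := 21)
    (by norm_num) le_rfl (by norm_num)
  rw [sstar_error]
  simp only [one_div_mul_eq_div] at hlow
  norm_num at hlow ⊢
  exact hlow
end

section
/- Perturbation lemma for strict improvement: let s* be continuous piecewise-affine on [a,b] with an interior knot t ∈ (x_q, x_{q+1}) for some q, and suppose on the segment of data abscissae to the left of t there is an affine function s₀ with Σ_{x_i ≤ x_q} (f_i − s₀(x_i))² < Σ_{x_i ≤ x_q} (f_i − s*(x_i))². Then for sufficiently small λ ∈ (0,1], the function obtained from s* by replacing it on (−∞, t_λ] by (1−λ)s* + λ s₀ (where t_λ ∈ (x_q, x_{q+1}) is the intersection of (1−λ)s* + λ s₀ with the branch of s* to the right of t, assumed to exist for small λ because s* has a jump in slope at t) has strictly smaller total sum of squared errors than s*, while its values at all data abscissae x_i > x_q are unchanged. -/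
/-!
Only the abscissae `x i ≤ x q` lie left of `t_λ`; there the new residuals are the convex
combination `(1 - λ) (f - s*) + λ (f - s₀)` of the old ones, so by convexity of the square their
squared sum is at most `(1 - λ) E(s*) + λ E(s₀) < E(s*)`. All other abscissae lie beyond
`x (q+1) > t_λ`, where nothing changes. In particular every `λ ∈ (0, 1]` works.
-/

open Finset

theorem sum_sq_convexComb_lt {ι : Type*} (s : Finset ι) (u v : ι → ℝ) {lam : ℝ}
    (hlam : 0 < lam) (hlam1 : lam ≤ 1) (h : ∑ i ∈ s, v i ^ 2 < ∑ i ∈ s, u i ^ 2) :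
    ∑ i ∈ s, ((1 - lam) * u i + lam * v i) ^ 2 < ∑ i ∈ s, u i ^ 2 :=
  calc ∑ i ∈ s, ((1 - lam) * u i + lam * v i) ^ 2
      ≤ ∑ i ∈ s, ((1 - lam) * u i ^ 2 + lam * v i ^ 2) := by
        gcongr with i
        -- the gap is `λ (1 - λ) (u - v)²`
        nlinarith [mul_nonneg (mul_nonneg hlam.le (sub_nonneg.2 hlam1)) (sq_nonneg (u i - v i))]
    _ = (1 - lam) * ∑ i ∈ s, u i ^ 2 + lam * ∑ i ∈ s, v i ^ 2 := by
        rw [sum_add_distrib, mul_sum, mul_sum]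
    _ < ∑ i ∈ s, u i ^ 2 := by nlinarith

theorem stmt16_general (μ q : ℕ) (hq : q ≤ μ) (x f : ℕ → ℝ)
    (hx : ∀ i, i ≤ μ → x i < x (i + 1))
    (sstar : ℝ → ℝ) (t : ℝ)
    (a0 b0 : ℝ)
    (hbetter : ∑ i ∈ Finset.range (q + 1), (f i - (a0 * x i + b0)) ^ 2 <
               ∑ i ∈ Finset.range (q + 1), (f i - sstar (x i)) ^ 2) :
    ∃ lam0 : ℝ, 0 < lam0 ∧ lam0 ≤ 1 ∧
      ∀ lam : ℝ, 0 < lam → lam ≤ lam0 →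
        ∀ tlam : ℝ, x q < tlam → tlam < x (q + 1) → t ≤ tlam →
          ((1 - lam) * sstar tlam + lam * (a0 * tlam + b0) = sstar tlam) →
          ∀ g : ℝ → ℝ,
            (∀ y, y ≤ tlam → g y = (1 - lam) * sstar y + lam * (a0 * y + b0)) →
            (∀ y, tlam < y → g y = sstar y) →
            (∑ i ∈ Finset.range (μ + 2), (f i - g (x i)) ^ 2 <
             ∑ i ∈ Finset.range (μ + 2), (f i - sstar (x i)) ^ 2) ∧
            (∀ i, q < i → i ≤ μ + 1 → g (x i) = sstar (x i)) := by
  refine ⟨1, one_pos, le_rfl, fun lam hlam hlam1 tlam hqt htq _ _ g hg_left hg_right => ?_⟩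
  have hmono : MonotoneOn x (Set.Iic (μ + 1)) :=
    (strictMonoOn_Iic_of_lt_succ fun m hm => hx m (Nat.lt_succ_iff.1 hm)).monotoneOn
  have hright : ∀ i, q < i → i ≤ μ + 1 → g (x i) = sstar (x i) := fun i hqi hi =>
    hg_right _ (htq.trans_le (hmono (Set.mem_Iic.2 (by omega)) hi hqi))
  have hleft : ∑ i ∈ range (q + 1), (f i - g (x i)) ^ 2
      < ∑ i ∈ range (q + 1), (f i - sstar (x i)) ^ 2 := by
    have hres : ∀ i ∈ range (q + 1), (f i - g (x i)) ^ 2 =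
        ((1 - lam) * (f i - sstar (x i)) + lam * (f i - (a0 * x i + b0))) ^ 2 := by
      intro i hi
      rw [mem_range] at hi
      have hiq : x i ≤ x q :=
        hmono (Set.mem_Iic.2 (by omega)) (Set.mem_Iic.2 (by omega)) (by omega)
      rw [hg_left _ (hiq.trans hqt.le)]
      ring
    rw [sum_congr rfl hres]
    exact sum_sq_convexComb_lt _ _ _ hlam hlam1 hbetter
  have htail : ∑ i ∈ Ico (q + 1) (μ + 2), (f i - g (x i)) ^ 2
      = ∑ i ∈ Ico (q + 1) (μ + 2), (f i - sstar (x i)) ^ 2 :=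
    sum_congr rfl fun i hi => by
      rw [mem_Ico] at hi
      rw [hright i (by omega) (by omega)]
  refine ⟨?_, hright⟩
  rw [← sum_range_add_sum_Ico _ (by omega : q + 1 ≤ μ + 2),
    ← sum_range_add_sum_Ico _ (by omega : q + 1 ≤ μ + 2), htail]
  exact add_lt_add_of_lt_of_le hleft le_rfl

/-- perturbation lemma. If an affine function `s₀` beats `s*` in
the least-squares sense on the segment of abscissae left of a proper interior
knot `t ∈ (x q, x (q+1))`, then for all sufficiently small `λ ∈ (0,1]` the
spline obtained by replacing `s*` on `(−∞, t_λ]` by `(1−λ)s* + λs₀` (where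
`t_λ ∈ (x q, x (q+1))`, `t_λ ≥ t`, is an intersection point with the right
branch of `s*`, assumed to exist) has strictly smaller total squared error,
while its values at all abscissae `x i` with `i > q` are unchanged. -/
theorem stmt16 (μ q : ℕ) (hq : q ≤ μ) (x f : ℕ → ℝ)
    (hx : ∀ i, i ≤ μ → x i < x (i + 1))
    (sstar : ℝ → ℝ) (t : ℝ) (ht1 : x q < t) (ht2 : t < x (q + 1))
    (aL bL aR bR : ℝ) (hslope : aL ≠ aR)
    (hLaff : ∀ y ∈ Set.Icc (x q) t, sstar y = aL * y + bL)
    (hRaff : ∀ y ∈ Set.Icc t (x (q + 1)), sstar y = aR * y + bR)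
    (a0 b0 : ℝ)
    (hbetter : ∑ i ∈ Finset.range (q + 1), (f i - (a0 * x i + b0)) ^ 2 <
               ∑ i ∈ Finset.range (q + 1), (f i - sstar (x i)) ^ 2) :
    ∃ lam0 : ℝ, 0 < lam0 ∧ lam0 ≤ 1 ∧
      ∀ lam : ℝ, 0 < lam → lam ≤ lam0 →
        ∀ tlam : ℝ, x q < tlam → tlam < x (q + 1) → t ≤ tlam →
          ((1 - lam) * sstar tlam + lam * (a0 * tlam + b0) = sstar tlam) →
          ∀ g : ℝ → ℝ,
            (∀ y, y ≤ tlam → g y = (1 - lam) * sstar y + lam * (a0 * y + b0)) →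
            (∀ y, tlam < y → g y = sstar y) →
            (∑ i ∈ Finset.range (μ + 2), (f i - g (x i)) ^ 2 <
             ∑ i ∈ Finset.range (μ + 2), (f i - sstar (x i)) ^ 2) ∧
            (∀ i, q < i → i ≤ μ + 1 → g (x i) = sstar (x i)) :=
  stmt16_general μ q hq x f hx sstar t a0 b0 hbetter
end
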